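/- For natural numbers t ≥ 1 and k: if α(t + k) ≤ t, then there exist natural numbers n_1, …, n_t such that k = (Σ_{i=1}^{t} 2^{n_i}) − t, and conversely. -/
import Mathlib

def alpha (n : ℕ) : ℕ := (Nat.digits 2 n).sum

lemma alpha_def {n : ℕ} (h : n ≠ 0) : alpha n = n % 2 + alpha (n / 2) := by
  unfold alpha
  rw [Nat.digits_def' (by norm_num : 1 < 2) (Nat.pos_of_ne_zero h)]
  simp

lemma alpha_zero : alpha 0 = 0 := by simp [alpha]

lemma alpha_one : alpha 1 = 1 := by simp [alpha]

lemma alpha_eq_zero {n : ℕ} (h : alpha n = 0) : n = 0 := by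
  induction n using Nat.strong_induction_on with
  | _ n ih =>
    rcases Nat.eq_zero_or_pos n with h0 | h0
    · exact h0
    · rw [alpha_def h0.ne'] at h
      have h2 := ih (n / 2) (Nat.div_lt_self h0 one_lt_two) (by omega)
      omega

lemma alpha_add_le : ∀ n a b : ℕ, a + b ≤ n → alpha (a + b) ≤ alpha a + alpha b := by
  intro n
  induction n with
  | zero =>
    intro a b h
    have ha : a = 0 := by omega
    have hb : b = 0 := by omega
    subst ha; subst hb; simp [alpha_zero]
  | succ n ih =>
    intro a b h
    rcases Nat.eq_zero_or_pos a with ha | ha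
    · subst ha; simp [alpha_zero]
    rcases Nat.eq_zero_or_pos b with hb | hb
    · subst hb; simp [alpha_zero]
    have hda : alpha a = a % 2 + alpha (a / 2) := alpha_def ha.ne'
    have hdb : alpha b = b % 2 + alpha (b / 2) := alpha_def hb.ne'
    have hab : a + b ≠ 0 := by omega
    have hd : alpha (a + b) = (a + b) % 2 + alpha ((a + b) / 2) := alpha_def hab
    rcases Nat.lt_or_ge (a % 2 + b % 2) 2 with hr | hr
    · have h1 : (a + b) % 2 = a % 2 + b % 2 := by omega
      have h2 : (a + b) / 2 = a / 2 + b / 2 := by omega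
      have h3 := ih (a / 2) (b / 2) (by omega)
      rw [h1, h2] at hd
      omega
    · -- both odd
      have h1 : (a + b) % 2 = 0 := by omega
      have h2 : (a + b) / 2 = a / 2 + (b / 2 + 1) := by omega
      have h3 := ih (a / 2) (b / 2 + 1) (by omega)
      have h4 := ih (b / 2) 1 (by omega)
      rw [alpha_one] at h4
      rw [h1, h2] at hd
      omega

lemma alpha_two_pow (n : ℕ) : alpha (2 ^ n) = 1 := by
  induction n with
  | zero => simpa using alpha_one
  | succ n ih =>
    rw [alpha_def (by positivity)]
    have h1 : 2 ^ (n + 1) % 2 = 0 := by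
      simp [pow_succ, Nat.mul_mod_left]
    have h2 : 2 ^ (n + 1) / 2 = 2 ^ n := by
      rw [pow_succ]; exact Nat.mul_div_cancel _ (by norm_num)
    rw [h1, h2, ih]

lemma alpha_sum_le {s : ℕ} (f : Fin s → ℕ) :
    alpha (∑ i, 2 ^ f i) ≤ s := by
  induction s with
  | zero => simp [alpha_zero]
  | succ s ih =>
    rw [Fin.sum_univ_castSucc]
    calc alpha (∑ i : Fin s, 2 ^ f (Fin.castSucc i) + 2 ^ f (Fin.last s))
        ≤ alpha (∑ i : Fin s, 2 ^ f (Fin.castSucc i)) + alpha (2 ^ f (Fin.last s)) :=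
          alpha_add_le _ _ _ le_rfl
      _ ≤ s + 1 := by
          have := ih (fun i => f (Fin.castSucc i))
          rw [alpha_two_pow]; omega

lemma exists_rep_alpha (m : ℕ) : ∃ f : Fin (alpha m) → ℕ, ∑ i, 2 ^ f i = m := by
  induction m using Nat.strong_induction_on with
  | _ m ih =>
    rcases Nat.eq_zero_or_pos m with h0 | h0
    · subst h0; exact ⟨fun i => 0, by simp [alpha_zero]⟩
    obtain ⟨f, hf⟩ := ih (m / 2) (Nat.div_lt_self h0 one_lt_two)
    have hd : alpha m = m % 2 + alpha (m / 2) := alpha_def h0.ne'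
    rcases Nat.even_or_odd m with he | ho
    · have h1 : m % 2 = 0 := Nat.even_iff.mp he
      have h2 : alpha m = alpha (m / 2) := by omega
      refine ⟨fun i => f (Fin.cast h2 i) + 1, ?_⟩
      rw [Fin.sum_congr' (fun i => 2 ^ (f i + 1)) h2]
      simp only [pow_succ]
      rw [← Finset.sum_mul, hf]
      omega
    · have h1 : m % 2 = 1 := Nat.odd_iff.mp ho
      have h2 : alpha m = alpha (m / 2) + 1 := by omega
      refine ⟨fun i => (Fin.cons 0 (fun j => f j + 1) : Fin (alpha (m / 2) + 1) → ℕ) (Fin.cast h2 i), ?_⟩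
      rw [Fin.sum_congr' (fun i => 2 ^ ((Fin.cons 0 (fun j => f j + 1) : Fin (alpha (m / 2) + 1) → ℕ) i)) h2]
      rw [Fin.sum_univ_succ]
      simp only [Fin.cons_zero, Fin.cons_succ, pow_succ, pow_zero]
      rw [← Finset.sum_mul, hf]
      omega

lemma split_rep {s m : ℕ} (f : Fin s → ℕ) (hf : ∑ i, 2 ^ f i = m) (hs : s < m) :
    ∃ g : Fin (s + 1) → ℕ, ∑ i, 2 ^ g i = m := by
  have hex : ∃ i, 1 ≤ f i := by
    by_contra hc
    push_neg at hc
    have : ∑ i : Fin s, 2 ^ f i ≤ ∑ _i : Fin s, 1 := by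
      apply Finset.sum_le_sum
      intro i _
      have := hc i
      have hz : f i = 0 := by omega
      simp [hz]
    simp at this
    omega
  obtain ⟨i, hi⟩ := hex
  refine ⟨Fin.snoc (Function.update f i (f i - 1)) (f i - 1), ?_⟩
  rw [Fin.sum_univ_castSucc]
  simp only [Fin.snoc_castSucc, Fin.snoc_last]
  have hcomm : (fun x => 2 ^ Function.update f i (f i - 1) x)
      = Function.update (fun j => 2 ^ f j) i (2 ^ (f i - 1)) := by
    funext x
    exact (Function.apply_update (fun _ y => 2 ^ y) f i (f i - 1) x)
  rw [show (∑ x : Fin s, 2 ^ Function.update f i (f i - 1) x)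
      = ∑ x : Fin s, Function.update (fun j => 2 ^ f j) i (2 ^ (f i - 1)) x from by rw [← hcomm]]
  rw [Finset.sum_update_of_mem (Finset.mem_univ i)]
  have h5 := Finset.add_sum_erase Finset.univ (fun j => 2 ^ f j) (Finset.mem_univ i)
  beta_reduce at h5
  rw [Finset.erase_eq, hf] at h5
  have hpow : 2 ^ (f i - 1) + 2 ^ (f i - 1) = 2 ^ f i := by
    have h : f i - 1 + 1 = f i := by omega
    calc 2 ^ (f i - 1) + 2 ^ (f i - 1) = 2 ^ (f i - 1 + 1) := by ring
      _ = 2 ^ f i := by rw [h]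
  omega

lemma exists_rep {t m : ℕ} (h1 : alpha m ≤ t) (h2 : t ≤ m) :
    ∃ f : Fin t → ℕ, ∑ i, 2 ^ f i = m := by
  induction t with
  | zero =>
    have : m = 0 := alpha_eq_zero (by omega)
    subst this
    exact ⟨fun i => 0, by simp⟩
  | succ t ih =>
    rcases Nat.lt_or_ge t (alpha m) with hlt | hge
    · have heq : alpha m = t + 1 := by omega
      rw [← heq]
      exact exists_rep_alpha m
    · obtain ⟨f, hf⟩ := ih hge (by omega)
      exact split_rep f hf (by omega)

theorem alpha_le_iff_sub (t k : ℕ) (ht : 1 ≤ t) :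
    alpha (t + k) ≤ t ↔ ∃ n : Fin t → ℕ, k = (∑ i, 2 ^ n i) - t := by
  constructor
  · intro h
    obtain ⟨f, hf⟩ := exists_rep h (by omega)
    exact ⟨f, by omega⟩
  · rintro ⟨f, hf⟩
    have hge : t ≤ ∑ i, 2 ^ f i := by
      calc t = ∑ _i : Fin t, 1 := by simp
        _ ≤ ∑ i, 2 ^ f i := Finset.sum_le_sum (fun i _ => Nat.one_le_two_pow)
    have : t + k = ∑ i, 2 ^ f i := by omega
    rw [this]
    exact alpha_sum_le f
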